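/- arXiv:1901.10329 — 4 statements merged into one kernel-verified Lean document; each statement's English description precedes it below -/
import Mathlib

section
/- For every δ > 0, the functions F₁ and F₂ are continuously differentiable on ℝ (of class C¹). -/
/-- For `δ > 0`, the function `F₁` from the decomposition of the logarithmic nonlinearity. -/
noncomputable def F1 (δ : ℝ) (s : ℝ) : ℝ :=
  if s = 0 then 0
  else if |s| < δ then -(1 / 2) * s ^ 2 * Real.log (s ^ 2)
  else -(1 / 2) * s ^ 2 * (Real.log (δ ^ 2) + 3) + 2 * δ * |s| - (1 / 2) * δ ^ 2

/-- For `δ > 0`, the function `F₂` from the decomposition of the logarithmic nonlinearity. -/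
noncomputable def F2 (δ : ℝ) (s : ℝ) : ℝ :=
  if |s| < δ then 0
  else (1 / 2) * s ^ 2 * Real.log (s ^ 2 / δ ^ 2) + 2 * δ * |s| - (3 / 2) * s ^ 2
    - (1 / 2) * δ ^ 2

/-!
Since Mathlib's `log` is even, `F₂ - F₁ = s² log s` everywhere, and this is `C¹` because its
derivative `2 s log s + s` extends continuously to `0`. The function `F₂` is smooth off `±δ`,
and its two branches, as well as their derivatives, agree at `|s| = δ`; so `F₂` is continuous and
its derivative extends to a continuous function on `ℝ`. A continuous function that is
differentiable off a finite set, with a derivative extending continuously, is `C¹`.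
-/

open Real Set Filter Topology

section DerivExtension

variable {E : Type*} [NormedAddCommGroup E] [NormedSpace ℝ E]

theorem hasDerivAt_of_eventually_hasDerivAt_nhdsNE {f g : ℝ → E} {x : ℝ}
    (hderiv : ∀ᶠ y in 𝓝[≠] x, HasDerivAt f (g y) y) (hf : ContinuousAt f x)
    (hg : ContinuousAt g x) : HasDerivAt f (g x) x := by
  set s := {y | HasDerivAt f (g y) y}
  have hdiff : DifferentiableOn ℝ f s := fun y hy => hy.differentiableAt.differentiableWithinAt
  have hderiv_eq : deriv f =ᶠ[𝓝[≠] x] g := hderiv.mono fun y hy => hy.deriv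
  have hright : HasDerivWithinAt f (g x) (Ici x) x :=
    hasDerivWithinAt_Ici_of_tendsto_deriv hdiff hf.continuousWithinAt
      (nhdsWithin_mono _ (fun y hy => ne_of_gt hy) hderiv)
      ((hg.tendsto.mono_left nhdsWithin_le_nhds).congr'
        (hderiv_eq.symm.filter_mono (nhdsWithin_mono _ fun y hy => ne_of_gt hy)))
  have hleft : HasDerivWithinAt f (g x) (Iic x) x :=
    hasDerivWithinAt_Iic_of_tendsto_deriv hdiff hf.continuousWithinAt
      (nhdsWithin_mono _ (fun y hy => ne_of_lt hy) hderiv)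
      ((hg.tendsto.mono_left nhdsWithin_le_nhds).congr'
        (hderiv_eq.symm.filter_mono (nhdsWithin_mono _ fun y hy => ne_of_lt hy)))
  simpa [Iic_union_Ici] using hleft.union hright

theorem contDiff_one_of_hasDerivAt_off_finite {f g : ℝ → E} {S : Set ℝ} (hS : S.Finite)
    (hf : Continuous f) (hg : Continuous g) (hderiv : ∀ x ∉ S, HasDerivAt f (g x) x) :
    ContDiff ℝ 1 f := by
  have hderiv_all : ∀ x, HasDerivAt f (g x) x := fun x =>
    hasDerivAt_of_eventually_hasDerivAt_nhdsNE
      (Filter.mem_of_superset (nhdsNE_of_nhdsNE_sdiff_finite univ_mem hS.to_subtype)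
        fun y hy => hderiv y hy.2)
      hf.continuousAt hg.continuousAt
  rw [contDiff_one_iff_deriv, show deriv f = g from funext fun x => (hderiv_all x).deriv]
  exact ⟨fun x => (hderiv_all x).differentiableAt, hg⟩

end DerivExtension

theorem contDiff_one_sq_mul_log : ContDiff ℝ 1 fun x : ℝ => x ^ 2 * log x := by
  have hf : (fun x : ℝ => x ^ 2 * log x) = fun x => x * (x * log x) := by
    funext x; ring
  rw [hf]
  refine contDiff_one_of_hasDerivAt_off_finite (g := fun x => 2 * (x * log x) + x)
    (finite_singleton 0) (by fun_prop) (by fun_prop) fun x hx => ?_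
  exact ((hasDerivAt_id' x).mul (hasDerivAt_mul_log hx)).congr_deriv (by ring)

noncomputable def F2Outer (δ s : ℝ) : ℝ :=
  (1 / 2) * s ^ 2 * log (s ^ 2 / δ ^ 2) + 2 * δ * |s| - (3 / 2) * s ^ 2 - (1 / 2) * δ ^ 2

/-- The clamp `max (-δ) (min s δ)` is `s` for `|s| ≤ δ` and `δ · sign s` otherwise. -/
noncomputable def F2Deriv (δ s : ℝ) : ℝ :=
  s * log (max (s ^ 2) (δ ^ 2) / δ ^ 2) - 2 * s + 2 * max (-δ) (min s δ)

section F2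

variable {δ s : ℝ}

theorem F2Outer_of_abs_eq (hδ : δ ≠ 0) (hs : |s| = δ) : F2Outer δ s = 0 := by
  rw [F2Outer, ← sq_abs, hs, div_self (pow_ne_zero 2 hδ), log_one]
  ring

theorem hasDerivAt_F2Outer (hδ : δ ≠ 0) (hs : s ≠ 0) :
    HasDerivAt (F2Outer δ) (s * log (s ^ 2 / δ ^ 2) - 2 * s + 2 * δ * SignType.sign s) s := by
  have hsq : HasDerivAt (fun x : ℝ => x ^ 2) (2 * s) s := by simpa using hasDerivAt_pow 2 s
  have hlog : HasDerivAt (fun x : ℝ => log (x ^ 2 / δ ^ 2)) (2 * s / δ ^ 2 / (s ^ 2 / δ ^ 2)) s :=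
    (hsq.div_const _).log (by positivity)
  refine ((((hsq.const_mul (1 / 2 : ℝ)).mul hlog).add ((hasDerivAt_abs hs).const_mul (2 * δ))).sub
    (hsq.const_mul (3 / 2 : ℝ))).sub_const _ |>.congr_deriv ?_
  field_simp
  ring

theorem continuous_F2 (hδ : 0 < δ) : Continuous (F2 δ) := by
  have hF2 : F2 δ = fun s => if δ ≤ |s| then F2Outer δ s else 0 := by
    funext s
    unfold F2
    split_ifs <;> first | rfl | linarith
  rw [hF2]
  refine continuous_if_le continuous_const continuous_abs (fun s hs => ?_) continuousOn_const
    fun s hs => F2Outer_of_abs_eq hδ.ne' hs.symm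
  exact (hasDerivAt_F2Outer hδ.ne' (abs_pos.1 (hδ.trans_le hs))).continuousAt.continuousWithinAt

theorem continuous_F2Deriv (hδ : δ ≠ 0) : Continuous (F2Deriv δ) := by
  refine Continuous.add (Continuous.sub ?_ (by fun_prop)) (by fun_prop)
  refine continuous_id.mul (continuous_iff_continuousAt.2 fun s => ?_)
  exact ContinuousAt.log (by fun_prop) (by positivity)

theorem hasDerivAt_F2 (hδ : 0 < δ) (hs : |s| ≠ δ) : HasDerivAt (F2 δ) (F2Deriv δ s) s := by
  rcases hs.lt_or_gt with hlt | hgt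
  · have hsq : s ^ 2 ≤ δ ^ 2 := sq_le_sq' (abs_lt.1 hlt).1.le (abs_lt.1 hlt).2.le
    have hderiv : F2Deriv δ s = 0 := by
      rw [F2Deriv, max_eq_right hsq, div_self (by positivity), log_one,
        min_eq_left (abs_lt.1 hlt).2.le, max_eq_right (abs_lt.1 hlt).1.le]
      ring
    rw [hderiv]
    refine (hasDerivAt_const s 0).congr_of_eventuallyEq ?_
    filter_upwards [(isOpen_lt continuous_abs continuous_const).mem_nhds hlt] with x hx
    exact if_pos hx
  · have hs0 : s ≠ 0 := abs_pos.1 (hδ.trans hgt)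
    have hderiv : F2Deriv δ s = s * log (s ^ 2 / δ ^ 2) - 2 * s + 2 * δ * SignType.sign s := by
      rw [F2Deriv, max_eq_left (sq_le_sq.2 (by rw [abs_of_pos hδ]; exact hgt.le))]
      rcases lt_abs.1 hgt with hpos | hneg
      · rw [min_eq_right hpos.le, max_eq_right (by linarith), sign_pos (hδ.trans hpos),
          SignType.coe_one]
        ring
      · rw [min_eq_left (by linarith), max_eq_left (by linarith), sign_neg (by linarith),
          SignType.coe_neg_one]
        ring
    rw [hderiv]
    refine (hasDerivAt_F2Outer hδ.ne' hs0).congr_of_eventuallyEq ?_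
    filter_upwards [(isOpen_lt continuous_const continuous_abs).mem_nhds hgt] with x hx
    exact if_neg hx.not_gt

theorem contDiff_one_F2 (hδ : 0 < δ) : ContDiff ℝ 1 (F2 δ) := by
  refine contDiff_one_of_hasDerivAt_off_finite ((finite_singleton δ).insert (-δ))
    (continuous_F2 hδ) (continuous_F2Deriv hδ.ne') fun s hs => hasDerivAt_F2 hδ ?_
  intro h
  rcases abs_eq hδ.le |>.1 h with rfl | rfl <;> simp at hs

theorem F1_eq_F2_sub (hδ : 0 < δ) (s : ℝ) : F1 δ s = F2 δ s - s ^ 2 * log s := by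
  rcases eq_or_ne s 0 with rfl | hs0
  · simp [F1, F2, hδ]
  by_cases hlt : |s| < δ
  · rw [F1, F2, if_neg hs0, if_pos hlt, if_pos hlt, log_pow]
    push_cast
    ring
  · rw [F1, F2, if_neg hs0, if_neg hlt, if_neg hlt, log_div (by positivity) (by positivity),
      log_pow, log_pow]
    push_cast
    ring

end F2

/-- For every `δ > 0`, the functions `F₁` and `F₂` are continuously
differentiable on `ℝ` (of class `C¹`). -/
theorem F1_F2_contDiff (δ : ℝ) (hδ : 0 < δ) :
    ContDiff ℝ 1 (F1 δ) ∧ ContDiff ℝ 1 (F2 δ) := by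
  have hF1 : F1 δ = fun s => F2 δ s - s ^ 2 * log s := funext (F1_eq_F2_sub hδ)
  refine ⟨?_, contDiff_one_F2 hδ⟩
  rw [hF1]
  exact (contDiff_one_F2 hδ).sub contDiff_one_sq_mul_log
end

section
/- If δ > 0 is sufficiently small (indeed for every δ with 0 < δ ≤ e^{−3/2}), the function F₁ is convex on ℝ, even, nonnegative, and satisfies F₁′(s)·s ≥ 0 for all s ∈ ℝ. -/
open Real Set Filter Topology

theorem Function.Even.deriv {𝕜 F : Type*} [NontriviallyNormedField 𝕜] [NormedAddCommGroup F]
    [NormedSpace 𝕜 F] {f : 𝕜 → F} (hf : f.Even) : (deriv f).Odd := fun x => by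
  have := deriv_comp_neg (f := f) (x := -x)
  rwa [funext hf, neg_neg] at this

theorem Function.Odd.monotone_of_monotoneOn_Ici {α β : Type*} [AddCommGroup α] [LinearOrder α]
    [IsOrderedAddMonoid α] [AddCommGroup β] [PartialOrder β] [IsOrderedAddMonoid β] {f : α → β}
    (hf : f.Odd) (hmono : MonotoneOn f (Ici 0)) : Monotone f := by
  refine MonotoneOn.Iic_union_Ici (fun x hx y hy hxy => ?_) hmono
  have := hmono (neg_nonneg.2 hy) (neg_nonneg.2 hx) (neg_le_neg hxy)
  rwa [hf, hf, neg_le_neg_iff] at this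

theorem HasDerivAt.of_eventuallyEq_nhdsLE_nhdsGE {F : Type*} [NormedAddCommGroup F]
    [NormedSpace ℝ F] {f g h : ℝ → F} {a : ℝ} {d : F} (hg : HasDerivAt g d a)
    (hh : HasDerivAt h d a) (hfg : f =ᶠ[𝓝[≤] a] g) (hfh : f =ᶠ[𝓝[≥] a] h) :
    HasDerivAt f d a := by
  have := (hg.hasDerivWithinAt.congr_of_eventuallyEq_of_mem hfg self_mem_Iic).union
    (hh.hasDerivWithinAt.congr_of_eventuallyEq_of_mem hfh self_mem_Ici)
  rwa [Iic_union_Ici, hasDerivWithinAt_univ] at this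

theorem neg_log_sq_sub_three_nonneg {s : ℝ} (hs : 0 < s) (hs' : s ≤ exp (-(3 / 2))) :
    0 ≤ -log (s ^ 2) - 3 := by
  have : log s ≤ -(3 / 2) := (log_le_iff_le_exp hs).2 hs'
  rw [log_pow]
  push_cast
  linarith

noncomputable def F1Inner (s : ℝ) : ℝ := -(1 / 2) * s ^ 2 * log (s ^ 2)

noncomputable def F1InnerDeriv (s : ℝ) : ℝ := -s * log (s ^ 2) - s

/-- The second-order Taylor polynomial of `F1Inner` at `δ`. -/
noncomputable def F1Outer (δ s : ℝ) : ℝ :=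
  -(1 / 2) * s ^ 2 * (log (δ ^ 2) + 3) + 2 * δ * s - (1 / 2) * δ ^ 2

noncomputable def F1OuterDeriv (δ s : ℝ) : ℝ := -(log (δ ^ 2) + 3) * s + 2 * δ

theorem F1Outer_self (δ : ℝ) : F1Outer δ δ = F1Inner δ := by
  unfold F1Outer F1Inner
  ring

theorem F1OuterDeriv_self (δ : ℝ) : F1OuterDeriv δ δ = F1InnerDeriv δ := by
  unfold F1OuterDeriv F1InnerDeriv
  ring

theorem hasDerivAt_F1Inner_zero : HasDerivAt F1Inner 0 0 := by
  rw [hasDerivAt_iff_tendsto_slope]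
  have key : Tendsto (fun h : ℝ => -(h * log h)) (𝓝[≠] 0) (𝓝 0) := by
    simpa using ((continuous_mul_log.tendsto 0).mono_left nhdsWithin_le_nhds).neg
  refine key.congr' ?_
  filter_upwards [self_mem_nhdsWithin] with h (hh : h ≠ 0)
  simp only [slope_def_field, F1Inner, log_pow]
  field_simp
  ring

theorem hasDerivAt_F1Inner (s : ℝ) : HasDerivAt F1Inner (F1InnerDeriv s) s := by
  rcases eq_or_ne s 0 with rfl | hs
  · simpa [F1InnerDeriv] using hasDerivAt_F1Inner_zero
  have hsq : HasDerivAt (fun x : ℝ => x ^ 2) (2 * s) s := by simpa using hasDerivAt_pow 2 s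
  refine ((hsq.const_mul (-(1 / 2) : ℝ)).mul (hsq.log (pow_ne_zero 2 hs))).congr_deriv ?_
  unfold F1InnerDeriv
  field_simp
  ring

theorem hasDerivAt_F1Outer (δ s : ℝ) : HasDerivAt (F1Outer δ) (F1OuterDeriv δ s) s := by
  have hsq : HasDerivAt (fun x : ℝ => x ^ 2) (2 * s) s := by simpa using hasDerivAt_pow 2 s
  refine ((((hsq.const_mul (-(1 / 2) : ℝ)).mul_const (log (δ ^ 2) + 3)).add
    ((hasDerivAt_id s).const_mul (2 * δ))).sub_const ((1 / 2) * δ ^ 2)).congr_deriv ?_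
  unfold F1OuterDeriv
  ring

theorem continuous_F1InnerDeriv : Continuous F1InnerDeriv := by
  have : F1InnerDeriv = fun s => -2 * (s * log s) - s := by
    funext s
    rw [F1InnerDeriv, log_pow]
    push_cast
    ring
  rw [this]
  fun_prop

theorem hasDerivAt_F1InnerDeriv {s : ℝ} (hs : s ≠ 0) :
    HasDerivAt F1InnerDeriv (-log (s ^ 2) - 3) s := by
  have hsq : HasDerivAt (fun x : ℝ => x ^ 2) (2 * s) s := by simpa using hasDerivAt_pow 2 s
  refine (((hasDerivAt_neg s).mul (hsq.log (pow_ne_zero 2 hs))).sub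
    (hasDerivAt_id s)).congr_deriv ?_
  field_simp
  ring

theorem monotoneOn_F1InnerDeriv {δ : ℝ} (hδ : δ ≤ exp (-(3 / 2))) :
    MonotoneOn F1InnerDeriv (Icc 0 δ) := by
  refine monotoneOn_of_deriv_nonneg (convex_Icc 0 δ) continuous_F1InnerDeriv.continuousOn
    (fun s hs => ?_) (fun s hs => ?_) <;> rw [interior_Icc] at hs
  · exact (hasDerivAt_F1InnerDeriv hs.1.ne').differentiableAt.differentiableWithinAt
  · rw [(hasDerivAt_F1InnerDeriv hs.1.ne').deriv]
    exact neg_log_sq_sub_three_nonneg hs.1 (hs.2.le.trans hδ)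

theorem monotone_F1OuterDeriv {δ : ℝ} (hδ : 0 < δ) (hδ' : δ ≤ exp (-(3 / 2))) :
    Monotone (F1OuterDeriv δ) := by
  have := neg_log_sq_sub_three_nonneg hδ hδ'
  intro s t hst
  unfold F1OuterDeriv
  nlinarith

section F1

variable {δ : ℝ}

theorem F1_even (δ : ℝ) : (F1 δ).Even := fun s => by
  simp [F1, abs_neg]

theorem F1_eq_F1Inner {s : ℝ} (hs : |s| ≤ δ) : F1 δ s = F1Inner s := by
  rcases eq_or_ne s 0 with rfl | hs0
  · simp [F1, F1Inner]
  rcases hs.lt_or_eq with h | h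
  · simp [F1, F1Inner, hs0, h]
  · have hsq : s ^ 2 = δ ^ 2 := by rw [← sq_abs, h]
    rw [F1, if_neg hs0, if_neg h.not_lt, h, F1Inner, hsq]
    exact F1Outer_self δ

theorem F1_eq_F1Outer (hδ : 0 < δ) {s : ℝ} (hs : δ ≤ s) : F1 δ s = F1Outer δ s := by
  have hs0 : 0 < s := hδ.trans_le hs
  rw [F1, if_neg hs0.ne', abs_of_pos hs0, if_neg (not_lt.2 hs), F1Outer]

theorem hasDerivAt_F1_of_abs_lt {s : ℝ} (hs : |s| < δ) :
    HasDerivAt (F1 δ) (F1InnerDeriv s) s := by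
  refine (hasDerivAt_F1Inner s).congr_of_eventuallyEq ?_
  filter_upwards [(isOpen_lt continuous_abs continuous_const).mem_nhds hs] with x hx
  exact F1_eq_F1Inner (le_of_lt hx)

theorem hasDerivAt_F1_self (hδ : 0 < δ) : HasDerivAt (F1 δ) (F1InnerDeriv δ) δ := by
  refine .of_eventuallyEq_nhdsLE_nhdsGE (hasDerivAt_F1Inner δ)
    (F1OuterDeriv_self δ ▸ hasDerivAt_F1Outer δ δ) ?_ ?_
  · filter_upwards [mem_nhdsWithin_of_mem_nhds (Ioi_mem_nhds (neg_lt_self hδ)), self_mem_nhdsWithin] with x hx hx'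
    exact F1_eq_F1Inner (abs_le.2 ⟨le_of_lt hx, hx'⟩)
  · filter_upwards [self_mem_nhdsWithin] with x hx using F1_eq_F1Outer hδ hx

theorem hasDerivAt_F1_of_mem_Icc (hδ : 0 < δ) {s : ℝ} (hs : s ∈ Icc 0 δ) :
    HasDerivAt (F1 δ) (F1InnerDeriv s) s := by
  rcases hs.2.lt_or_eq with h | rfl
  · exact hasDerivAt_F1_of_abs_lt (by rwa [abs_of_nonneg hs.1])
  · exact hasDerivAt_F1_self hδ

theorem hasDerivAt_F1_of_le (hδ : 0 < δ) {s : ℝ} (hs : δ ≤ s) :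
    HasDerivAt (F1 δ) (F1OuterDeriv δ s) s := by
  rcases hs.lt_or_eq with h | rfl
  · refine (hasDerivAt_F1Outer δ s).congr_of_eventuallyEq ?_
    filter_upwards [Ioi_mem_nhds h] with x hx using F1_eq_F1Outer hδ (le_of_lt hx)
  · exact F1OuterDeriv_self δ ▸ hasDerivAt_F1_self hδ

theorem differentiable_F1 (hδ : 0 < δ) : Differentiable ℝ (F1 δ) := by
  have hnonneg : ∀ s, 0 ≤ s → DifferentiableAt ℝ (F1 δ) s := fun s hs =>
    (le_total s δ).elim (fun h => (hasDerivAt_F1_of_mem_Icc hδ ⟨hs, h⟩).differentiableAt)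
      (fun h => (hasDerivAt_F1_of_le hδ h).differentiableAt)
  intro s
  rcases le_total 0 s with hs | hs
  · exact hnonneg s hs
  · rw [differentiableAt_iff_comp_neg, funext (F1_even δ)]
    exact hnonneg (-s) (neg_nonneg.2 hs)

theorem deriv_F1_zero (hδ : 0 < δ) : deriv (F1 δ) 0 = 0 := by
  simp [(hasDerivAt_F1_of_mem_Icc hδ ⟨le_rfl, hδ.le⟩).deriv, F1InnerDeriv]

theorem monotone_deriv_F1 (hδ : 0 < δ) (hδ' : δ ≤ exp (-(3 / 2))) :
    Monotone (deriv (F1 δ)) := by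
  refine (F1_even δ).deriv.monotone_of_monotoneOn_Ici ?_
  rw [← Icc_union_Ici_eq_Ici hδ.le]
  refine MonotoneOn.union_right ?_ ?_ (isGreatest_Icc hδ.le) isLeast_Ici
  · exact (monotoneOn_F1InnerDeriv hδ').congr fun s hs =>
      (hasDerivAt_F1_of_mem_Icc hδ hs).deriv.symm
  · exact ((monotone_F1OuterDeriv hδ hδ').monotoneOn _).congr fun s hs =>
      (hasDerivAt_F1_of_le hδ hs).deriv.symm

end F1

/-- If `δ > 0` is sufficiently small (indeed for every `δ` with
`0 < δ ≤ e^{−3/2}`), the function `F₁` is convex on `ℝ`, even, nonnegative, and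
satisfies `F₁′(s)·s ≥ 0` for all `s ∈ ℝ`. -/
theorem F1_convex_even_nonneg (δ : ℝ) (hδ : 0 < δ) (hδ' : δ ≤ Real.exp (-(3 / 2))) :
    ConvexOn ℝ Set.univ (F1 δ) ∧ Function.Even (F1 δ) ∧ (∀ s : ℝ, 0 ≤ F1 δ s) ∧
      ∀ s : ℝ, deriv (F1 δ) s * s ≥ 0 := by
  have hmono := monotone_deriv_F1 hδ hδ'
  have hconv : ConvexOn ℝ univ (F1 δ) := hmono.convexOn_univ_of_deriv (differentiable_F1 hδ)
  refine ⟨hconv, F1_even δ, fun s => ?_, fun s => ?_⟩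
  · have hmin : IsMinOn (F1 δ) univ 0 := by
      refine hconv.isMinOn_of_rightDeriv_eq_zero (by simp) ?_
      rw [(differentiable_F1 hδ 0).hasDerivAt.hasDerivWithinAt.derivWithin
        (uniqueDiffWithinAt_Ioi 0)]
      exact deriv_F1_zero hδ
    simpa [F1] using hmin (mem_univ s)
  · rcases le_total 0 s with hs | hs
    · exact mul_nonneg (deriv_F1_zero hδ ▸ hmono hs) hs
    · exact mul_nonneg_of_nonpos_of_nonpos (deriv_F1_zero hδ ▸ hmono hs) hs
end

section
/- Let N ≥ 1, fix R₀ > 0 and ε > 0. Let (u_n) be a sequence in L²(ℝ^N) with sup_n ∫_{ℝ^N} u_n² dx < ∞, and let u ∈ L²(ℝ^N) with u ≠ 0, such that u_n → u in L²(B_R(0)) for every R > 0. Then Q_ε(u_n) → Q_ε(u) in ℝ^N. -/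
open MeasureTheory Filter

/-- The truncation map `χ(x) = x` if `|x| ≤ R₀`, `χ(x) = R₀·x/|x|` if `|x| > R₀`. -/
noncomputable def chi {N : ℕ} (R₀ : ℝ) (x : EuclideanSpace ℝ (Fin N)) :
    EuclideanSpace ℝ (Fin N) :=
  if ‖x‖ ≤ R₀ then x else (R₀ / ‖x‖) • x

/-- The barycenter-type map
`Q_ε(u) = (∫ χ(εx)·g(εx)·u(x)² dx) / (∫ g(εx)·u(x)² dx)`. -/
noncomputable def Qeps {N : ℕ} (R₀ : ℝ) (g : EuclideanSpace ℝ (Fin N) → ℝ) (ε : ℝ)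
    (u : EuclideanSpace ℝ (Fin N) → ℝ) : EuclideanSpace ℝ (Fin N) :=
  (∫ x, g (ε • x) * (u x) ^ 2)⁻¹ • ∫ x, (g (ε • x) * (u x) ^ 2) • chi R₀ (ε • x)

/-!
Both integrals defining `Q_ε(u)` have the form `∫ u² φ` with `φ` bounded and vanishing at
infinity, namely `φ = g(ε·)` and `φ = g(ε·) χ(ε·)`. Split such an integral at a large ball:
outside it `|φ|` is small while `∫ u_n²` stays bounded, and inside it `u_n → u` in `L²`, so
`∫ |u_n² - u²| ≤ ‖u_n - u‖² + 2 ‖u_n - u‖ ‖u‖ → 0` by Cauchy–Schwarz. The limit denominator is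
positive because `g > 0` and `u ≠ 0`.
-/

open Topology Metric Bornology

section
variable {α : Type*} [MeasurableSpace α] {μ : Measure α}

theorem integral_abs_mul_abs_le_sqrt {f g : α → ℝ} (hf : MemLp f 2 μ) (hg : MemLp g 2 μ) :
    ∫ x, |f x| * |g x| ∂μ ≤ √(∫ x, f x ^ 2 ∂μ) * √(∫ x, g x ^ 2 ∂μ) := by
  have h2 : ENNReal.ofReal 2 = 2 := by norm_num
  have := integral_mul_le_Lp_mul_Lq_of_nonneg Real.HolderConjugate.two_two
    (Eventually.of_forall fun x => abs_nonneg (f x))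
    (Eventually.of_forall fun x => abs_nonneg (g x))
    (h2 ▸ hf.abs) (h2 ▸ hg.abs)
  rw [Real.sqrt_eq_rpow, Real.sqrt_eq_rpow]
  simpa only [Real.rpow_two, sq_abs] using this

theorem abs_sq_sub_sq_le (a b : ℝ) : |a ^ 2 - b ^ 2| ≤ (a - b) ^ 2 + 2 * (|a - b| * |b|) := by
  calc |a ^ 2 - b ^ 2| = |(a - b) ^ 2 + 2 * ((a - b) * b)| := by ring_nf
    _ ≤ (a - b) ^ 2 + 2 * (|a - b| * |b|) := by
      refine (abs_add_le _ _).trans ?_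
      rw [abs_of_nonneg (sq_nonneg _), abs_mul, abs_two, abs_mul]

theorem tendsto_integral_abs_sq_sub_sq {ι : Type*} {l : Filter ι} {u : ι → α → ℝ} {v : α → ℝ}
    (hu : ∀ n, MemLp (u n) 2 μ) (hv : MemLp v 2 μ)
    (h : Tendsto (fun n => ∫ x, (u n x - v x) ^ 2 ∂μ) l (𝓝 0)) :
    Tendsto (fun n => ∫ x, |u n x ^ 2 - v x ^ 2| ∂μ) l (𝓝 0) := by
  have hlim : Tendsto (fun n => (∫ x, (u n x - v x) ^ 2 ∂μ)
      + 2 * (√(∫ x, (u n x - v x) ^ 2 ∂μ) * √(∫ x, v x ^ 2 ∂μ))) l (𝓝 0) := by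
    simpa using h.add (((Real.continuous_sqrt.tendsto 0).comp h).mul_const _ |>.const_mul 2)
  refine squeeze_zero (fun n => integral_nonneg fun x => abs_nonneg _) (fun n => ?_) hlim
  have huv : MemLp (fun x => u n x - v x) 2 μ := (hu n).sub hv
  have hcross : Integrable (fun x => |u n x - v x| * |v x|) μ := huv.abs.integrable_mul hv.abs
  calc ∫ x, |u n x ^ 2 - v x ^ 2| ∂μ
      ≤ ∫ x, (u n x - v x) ^ 2 + 2 * (|u n x - v x| * |v x|) ∂μ :=
        integral_mono_of_nonneg (Eventually.of_forall fun x => abs_nonneg _)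
          (huv.integrable_sq.add (hcross.const_mul 2))
          (Eventually.of_forall fun x => abs_sq_sub_sq_le _ _)
    _ = (∫ x, (u n x - v x) ^ 2 ∂μ) + 2 * ∫ x, |u n x - v x| * |v x| ∂μ := by
        rw [integral_add huv.integrable_sq (hcross.const_mul 2), integral_const_mul]
    _ ≤ _ := by
        gcongr
        exact integral_abs_mul_abs_le_sqrt huv hv

theorem norm_integral_smul_le_of_norm_le {F : Type*} [NormedAddCommGroup F] [NormedSpace ℝ F]
    {f : α → ℝ} {φ : α → F} {C : ℝ} (hf : Integrable f μ) (hφ : ∀ᵐ x ∂μ, ‖φ x‖ ≤ C) :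
    ‖∫ x, f x • φ x ∂μ‖ ≤ C * ∫ x, |f x| ∂μ := by
  rw [← integral_const_mul]
  refine norm_integral_le_of_norm_le (hf.abs.const_mul C) (hφ.mono fun x hx => ?_)
  rw [norm_smul, Real.norm_eq_abs, mul_comm]
  exact mul_le_mul_of_nonneg_right hx (abs_nonneg _)

theorem setIntegral_abs_sq_sub_sq_le {u v : α → ℝ} (hu : MemLp u 2 μ) (hv : MemLp v 2 μ)
    (s : Set α) : ∫ x in s, |u x ^ 2 - v x ^ 2| ∂μ ≤ (∫ x, u x ^ 2 ∂μ) + ∫ x, v x ^ 2 ∂μ := by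
  have hsq : ∀ {w : α → ℝ}, MemLp w 2 μ → ∫ x in s, w x ^ 2 ∂μ ≤ ∫ x, w x ^ 2 ∂μ := fun hw =>
    setIntegral_le_integral hw.integrable_sq (Eventually.of_forall fun x => sq_nonneg _)
  calc ∫ x in s, |u x ^ 2 - v x ^ 2| ∂μ ≤ ∫ x in s, u x ^ 2 + v x ^ 2 ∂μ :=
        integral_mono_of_nonneg (Eventually.of_forall fun x => abs_nonneg _)
          (hu.integrable_sq.add hv.integrable_sq).restrict
          (Eventually.of_forall fun x => abs_sub_le_of_nonneg_of_le (sq_nonneg _)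
            (le_add_of_nonneg_right (sq_nonneg _)) (sq_nonneg _)
            (le_add_of_nonneg_left (sq_nonneg _)))
    _ = (∫ x in s, u x ^ 2 ∂μ) + ∫ x in s, v x ^ 2 ∂μ :=
        integral_add hu.integrable_sq.restrict hv.integrable_sq.restrict
    _ ≤ _ := add_le_add (hsq hu) (hsq hv)

theorem integral_mul_sq_pos {w v : α → ℝ} (hw : ∀ x, 0 < w x)
    (hint : Integrable (fun x => w x * v x ^ 2) μ) (hv : ¬ v =ᵐ[μ] 0) :
    0 < ∫ x, w x * v x ^ 2 ∂μ := by
  have hnonneg : 0 ≤ fun x => w x * v x ^ 2 := fun x => mul_nonneg (hw x).le (sq_nonneg _)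
  refine (integral_nonneg hnonneg).lt_of_ne fun h => hv ?_
  filter_upwards [(integral_eq_zero_iff_of_nonneg hnonneg hint).1 h.symm] with x hx
  simpa [(hw x).ne'] using hx

end

theorem tendsto_integral_sq_smul_of_tendsto_setIntegral_ball {E F : Type*}
    [NormedAddCommGroup E] [MeasurableSpace E] [OpensMeasurableSpace E] {μ : Measure E}
    [NormedAddCommGroup F] [NormedSpace ℝ F] {φ : E → F} {C M : ℝ}
    (hφm : AEStronglyMeasurable φ μ) (hφC : ∀ x, ‖φ x‖ ≤ C) (hφ0 : Tendsto φ (cobounded E) (𝓝 0))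
    {u : ℕ → E → ℝ} (hu : ∀ n, MemLp (u n) 2 μ) (hM : ∀ n, ∫ x, u n x ^ 2 ∂μ ≤ M)
    {v : E → ℝ} (hv : MemLp v 2 μ)
    (hconv : ∀ R : ℝ, 0 < R →
      Tendsto (fun n => ∫ x in ball 0 R, (u n x - v x) ^ 2 ∂μ) atTop (𝓝 0)) :
    Tendsto (fun n => ∫ x, u n x ^ 2 • φ x ∂μ) atTop (𝓝 (∫ x, v x ^ 2 • φ x ∂μ)) := by
  have hφ : ∀ {f : E → ℝ}, Integrable f μ → Integrable (fun x => f x • φ x) μ := fun hf =>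
    hf.smul_of_top_left (memLp_top_of_bound hφm C (Eventually.of_forall hφC))
  have hdiff : ∀ n, Integrable (fun x => u n x ^ 2 - v x ^ 2) μ := fun n =>
    (hu n).integrable_sq.sub hv.integrable_sq
  refine Metric.tendsto_atTop.2 fun η hη => ?_
  obtain ⟨δ, hδ, hδη⟩ := exists_pos_mul_lt (half_pos hη) (M + ∫ x, v x ^ 2 ∂μ)
  obtain ⟨R, hR, hRφ⟩ := ((eventually_gt_atTop 0).and
    ((hasAntitoneBasis_cobounded_compl_ball (0 : E)).eventually_subset
      (hφ0.eventually (closedBall_mem_nhds 0 hδ)))).exists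
  have hball : Tendsto (fun n => C * ∫ x in ball 0 R, |u n x ^ 2 - v x ^ 2| ∂μ) atTop (𝓝 0) := by
    simpa using (tendsto_integral_abs_sq_sub_sq (fun n => (hu n).restrict _) (hv.restrict _)
      (hconv R hR)).const_mul C
  obtain ⟨n₀, hn₀⟩ := eventually_atTop.1 (hball.eventually_lt_const (half_pos hη))
  refine ⟨n₀, fun n hn => ?_⟩
  have hφ_out : ∀ᵐ x ∂μ.restrict (ball 0 R)ᶜ, ‖φ x‖ ≤ δ :=
    (ae_restrict_iff' measurableSet_ball.compl).2
      (Eventually.of_forall fun x hx => by simpa using hRφ hx)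
  calc dist (∫ x, u n x ^ 2 • φ x ∂μ) (∫ x, v x ^ 2 • φ x ∂μ)
      = ‖∫ x, (u n x ^ 2 - v x ^ 2) • φ x ∂μ‖ := by
        simp_rw [dist_eq_norm, sub_smul]
        rw [integral_sub (hφ (hu n).integrable_sq) (hφ hv.integrable_sq)]
    _ = ‖(∫ x in ball 0 R, (u n x ^ 2 - v x ^ 2) • φ x ∂μ)
          + ∫ x in (ball 0 R)ᶜ, (u n x ^ 2 - v x ^ 2) • φ x ∂μ‖ := by
        rw [integral_add_compl measurableSet_ball (hφ (hdiff n))]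
    _ ≤ C * (∫ x in ball 0 R, |u n x ^ 2 - v x ^ 2| ∂μ)
          + δ * ∫ x in (ball 0 R)ᶜ, |u n x ^ 2 - v x ^ 2| ∂μ :=
        (norm_add_le _ _).trans (add_le_add
          (norm_integral_smul_le_of_norm_le (hdiff n).restrict (Eventually.of_forall hφC))
          (norm_integral_smul_le_of_norm_le (hdiff n).restrict hφ_out))
    _ ≤ C * (∫ x in ball 0 R, |u n x ^ 2 - v x ^ 2| ∂μ) + (M + ∫ x, v x ^ 2 ∂μ) * δ := by
        rw [mul_comm _ δ]
        gcongr
        exact (setIntegral_abs_sq_sub_sq_le (hu n) hv _).trans (by gcongr; exact hM n)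
    _ < η := by linarith [hn₀ n hn]

theorem measurable_chi {N : ℕ} (R₀ : ℝ) : Measurable (chi (N := N) R₀) :=
  Measurable.ite (measurableSet_le measurable_norm measurable_const) measurable_id
    ((measurable_const.div measurable_norm).smul measurable_id)

theorem norm_chi_le {N : ℕ} (R₀ : ℝ) (x : EuclideanSpace ℝ (Fin N)) : ‖chi R₀ x‖ ≤ |R₀| := by
  unfold chi
  split_ifs with h
  · exact h.trans (le_abs_self R₀)
  · rw [norm_smul, norm_div, Real.norm_eq_abs, norm_norm]
    rcases eq_or_ne ‖x‖ 0 with hx | hx <;> simp [hx]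

theorem Qeps_continuous_local_L2_general (N : ℕ) (R₀ : ℝ)
    (g : EuclideanSpace ℝ (Fin N) → ℝ) (hg : Continuous g) (hgpos : ∀ x, 0 < g x)
    (hg0 : Tendsto g (cocompact _) (nhds 0))
    (ε : ℝ) (hε : 0 < ε)
    (u : ℕ → EuclideanSpace ℝ (Fin N) → ℝ) (hun : ∀ n, MemLp (u n) 2 volume)
    (hbdd : ∃ M : ℝ, ∀ n, (∫ x, (u n x) ^ 2) ≤ M)
    (v : EuclideanSpace ℝ (Fin N) → ℝ) (hv : MemLp v 2 volume)
    (hvne : ¬ v =ᵐ[volume] 0)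
    (hconv : ∀ R : ℝ, 0 < R →
      Tendsto (fun n => ∫ x in Metric.ball (0 : EuclideanSpace ℝ (Fin N)) R,
        (u n x - v x) ^ 2) atTop (nhds 0)) :
    Tendsto (fun n => Qeps R₀ g ε (u n)) atTop (nhds (Qeps R₀ g ε v)) := by
  obtain ⟨M, hM⟩ := hbdd
  obtain ⟨C, hC⟩ := isBounded_iff_forall_norm_le.1
    (ZeroAtInftyContinuousMap.isBounded_range ⟨⟨g, hg⟩, hg0⟩)
  have hgεC : ∀ x, ‖g (ε • x)‖ ≤ C := fun x => hC _ ⟨_, rfl⟩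
  have hgεm : AEStronglyMeasurable (fun x => g (ε • x)) volume := by fun_prop
  have hgε0 : Tendsto (fun x => g (ε • x)) (cobounded _) (𝓝 0) := by
    rw [cobounded_eq_cocompact]
    exact hg0.comp (Homeomorph.smulOfNeZero ε hε.ne').isClosedEmbedding.tendsto_cocompact
  have hden : Tendsto (fun n => ∫ x, g (ε • x) * u n x ^ 2) atTop
      (𝓝 (∫ x, g (ε • x) * v x ^ 2)) := by
    simpa only [smul_eq_mul, mul_comm] using
      tendsto_integral_sq_smul_of_tendsto_setIntegral_ball hgεm hgεC hgε0 hun hM hv hconv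
  have hnum : Tendsto (fun n => ∫ x, (g (ε • x) * u n x ^ 2) • chi R₀ (ε • x)) atTop
      (𝓝 (∫ x, (g (ε • x) * v x ^ 2) • chi R₀ (ε • x))) := by
    have hχm : AEStronglyMeasurable (fun x : EuclideanSpace ℝ (Fin N) => chi R₀ (ε • x)) volume :=
      ((measurable_chi R₀).comp (measurable_const_smul ε)).aestronglyMeasurable
    have hχC : ∀ x, ‖g (ε • x) • chi R₀ (ε • x)‖ ≤ C * |R₀| := fun x => by
      rw [norm_smul]
      exact mul_le_mul (hgεC x) (norm_chi_le _ _) (norm_nonneg _) ((norm_nonneg _).trans (hgεC x))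
    have hχ0 : Tendsto (fun x => g (ε • x) • chi R₀ (ε • x)) (cobounded _) (𝓝 0) :=
      hgε0.zero_smul_isBoundedUnder_le (isBoundedUnder_of ⟨|R₀|, fun x => norm_chi_le _ _⟩)
    simpa only [mul_comm (g _), mul_smul] using
      tendsto_integral_sq_smul_of_tendsto_setIntegral_ball
        (φ := fun x => g (ε • x) • chi R₀ (ε • x)) (hgεm.smul hχm) hχC hχ0 hun hM hv hconv
  have hpos := integral_mul_sq_pos (fun x => hgpos (ε • x))
    (hv.integrable_sq.bdd_mul hgεm (Eventually.of_forall hgεC)) hvne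
  exact (hden.inv₀ hpos.ne').smul hnum

/-- Fix `R₀ > 0`, `ε > 0` and `g` continuous, positive, vanishing at
infinity. If `(u_n) ⊂ L²(ℝ^N)` has uniformly bounded `L²` norms, `u ∈ L²(ℝ^N)` with
`u ≠ 0`, and `u_n → u` in `L²(B_R(0))` for every `R > 0`, then `Q_ε(u_n) → Q_ε(u)`. -/
theorem Qeps_continuous_local_L2 (N : ℕ) (hN : 1 ≤ N) (R₀ : ℝ) (hR₀ : 0 < R₀)
    (g : EuclideanSpace ℝ (Fin N) → ℝ) (hg : Continuous g) (hgpos : ∀ x, 0 < g x)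
    (hg0 : Tendsto g (cocompact _) (nhds 0))
    (ε : ℝ) (hε : 0 < ε)
    (u : ℕ → EuclideanSpace ℝ (Fin N) → ℝ) (hun : ∀ n, MemLp (u n) 2 volume)
    (hbdd : ∃ M : ℝ, ∀ n, (∫ x, (u n x) ^ 2) ≤ M)
    (v : EuclideanSpace ℝ (Fin N) → ℝ) (hv : MemLp v 2 volume)
    (hvne : ¬ v =ᵐ[volume] 0)
    (hconv : ∀ R : ℝ, 0 < R →
      Tendsto (fun n => ∫ x in Metric.ball (0 : EuclideanSpace ℝ (Fin N)) R,
        (u n x - v x) ^ 2) atTop (nhds 0)) :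
    Tendsto (fun n => Qeps R₀ g ε (u n)) atTop (nhds (Qeps R₀ g ε v)) :=
  Qeps_continuous_local_L2_general N R₀ g hg hgpos hg0 ε hε u hun hbdd v hv hvne hconv
end

section
/- For every N ≥ 1 there exists a smooth function u : ℝ^N → ℝ such that u ∈ L²(ℝ^N) (i.e. ∫ u² dx < ∞) and |∇u| ∈ L²(ℝ^N) (i.e. ∫ |∇u|² dx < ∞), but the function x ↦ u(x)²·log(u(x)²) is NOT Lebesgue integrable on ℝ^N; in fact ∫_{ℝ^N} (u²·log u²)⁻ dx = +∞, where (·)⁻ denotes the negative part. Hence the formal energy functional of the logarithmic Schrödinger equation is not well defined on H¹(ℝ^N). -/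
open MeasureTheory Real Set Finset

noncomputable section LogSchrAux
namespace LogSchrAux

def L (t : ℝ) : ℝ := Real.log (1 + t^2)
def dL (t : ℝ) : ℝ := 2*t / (1 + t^2)
def w (t : ℝ) : ℝ := Real.exp (-(L t)/4) * (Real.exp 1 + L t)⁻¹
def w' (t : ℝ) : ℝ := Real.exp (-(L t)/4) * (-(dL t)/4) * (Real.exp 1 + L t)⁻¹
  + Real.exp (-(L t)/4) * (-(dL t) / (Real.exp 1 + L t)^2)
def gauss (t : ℝ) : ℝ := Real.exp (-t^2)
def gauss' (t : ℝ) : ℝ := Real.exp (-t^2) * (-(2*t))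
def phi (t : ℝ) : ℝ := (1/2) * L t * (w t)^2
def rho (t : ℝ) : ℝ := (1/16) * Real.log (Real.exp 1 + L t)
def rho' (t : ℝ) : ℝ := (1/16) * (dL t / (Real.exp 1 + L t))

lemma one_add_sq_pos (t : ℝ) : (0:ℝ) < 1 + t^2 := by positivity
lemma L_nonneg (t : ℝ) : 0 ≤ L t := Real.log_nonneg (by nlinarith [sq_nonneg t])
lemma eL_pos (t : ℝ) : 0 < Real.exp 1 + L t := by
  have := Real.exp_pos 1; have := L_nonneg t; linarith
lemma expL (t : ℝ) : Real.exp (L t) = 1 + t^2 := Real.exp_log (one_add_sq_pos t)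
lemma exp_half_sq (t : ℝ) : Real.exp (L t / 2) ^ 2 = 1 + t^2 := by
  rw [← Real.exp_nat_mul]; rw [← expL t]; ring_nf
lemma w_pos (t : ℝ) : 0 < w t := by
  have h := eL_pos t
  exact mul_pos (Real.exp_pos _) (inv_pos.2 h)
lemma w_le_inv_e (t : ℝ) : w t ≤ (Real.exp 1)⁻¹ := by
  have h1 : Real.exp (-(L t)/4) ≤ 1 := by
    rw [Real.exp_le_one_iff]; have := L_nonneg t; linarith
  have h2 : (Real.exp 1 + L t)⁻¹ ≤ (Real.exp 1)⁻¹ := by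
    apply inv_anti₀ (Real.exp_pos 1); have := L_nonneg t; linarith
  calc w t ≤ 1 * (Real.exp 1 + L t)⁻¹ := by
        unfold w; gcongr; exact (inv_pos.2 (eL_pos t)).le
    _ ≤ (Real.exp 1)⁻¹ := by rw [one_mul]; exact h2
lemma w_le_one (t : ℝ) : w t ≤ 1 := by
  refine (w_le_inv_e t).trans ?_
  rw [inv_le_one_iff₀]; right; exact Real.one_le_exp (by norm_num)
lemma w_sq (t : ℝ) : (w t)^2 = Real.exp (-(L t)/2) * ((Real.exp 1 + L t)^2)⁻¹ := by
  unfold w; rw [mul_pow, ← Real.exp_nat_mul, ← inv_pow]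
  norm_num
  left; ring_nf
lemma gauss_pos (t : ℝ) : 0 < gauss t := Real.exp_pos _
lemma gauss_le_one (t : ℝ) : gauss t ≤ 1 := by
  rw [gauss, Real.exp_le_one_iff]; simpa using sq_nonneg t

lemma hasDerivAt_L (t : ℝ) : HasDerivAt L (dL t) t := by
  have h : HasDerivAt (fun t : ℝ => 1 + t^2) (2*t) t := by
    simpa using ((hasDerivAt_pow 2 t).const_add 1)
  show HasDerivAt (fun t : ℝ => Real.log (1 + t^2)) (dL t) t; simpa [dL] using (h.log (one_add_sq_pos t).ne')

lemma hasDerivAt_w (t : ℝ) : HasDerivAt w (w' t) t := by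
  have hL := hasDerivAt_L t
  have h1 : HasDerivAt (fun t => Real.exp (-(L t)/4)) (Real.exp (-(L t)/4) * (-(dL t)/4)) t := by
    have : HasDerivAt (fun t => -(L t)/4) (-(dL t)/4) t := (hL.neg).div_const 4
    exact this.exp
  have h2 : HasDerivAt (fun t => (Real.exp 1 + L t)⁻¹)
      (-(dL t) / (Real.exp 1 + L t)^2) t := by
    have : HasDerivAt (fun t => Real.exp 1 + L t) (dL t) t := hL.const_add _
    simpa using this.fun_inv (eL_pos t).ne'
  have h := h1.mul h2
  have : w' t = Real.exp (-(L t)/4) * (-(dL t)/4) * (Real.exp 1 + L t)⁻¹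
      + Real.exp (-(L t)/4) * (-(dL t) / (Real.exp 1 + L t)^2) := rfl
  rw [this]; exact h

lemma hasDerivAt_gauss (t : ℝ) : HasDerivAt gauss (gauss' t) t := by
  have h : HasDerivAt (fun t : ℝ => -t^2) (-(2*t)) t := by
    simpa using (hasDerivAt_pow 2 t).fun_neg
  show HasDerivAt (fun t : ℝ => Real.exp (-t^2)) (gauss' t) t; simpa [gauss', mul_comm] using h.exp


lemma contDiff_L : ContDiff ℝ (⊤ : ℕ∞) L := by
  have h : ContDiff ℝ (⊤ : ℕ∞) (fun t : ℝ => 1 + t^2) := by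
    exact contDiff_const.add (contDiff_id.pow 2)
  exact h.log (fun t => (one_add_sq_pos t).ne')

lemma contDiff_w : ContDiff ℝ (⊤ : ℕ∞) w := by
  have h1 : ContDiff ℝ (⊤ : ℕ∞) (fun t => Real.exp (-(L t)/4)) :=
    ((contDiff_L.neg).div_const 4).exp
  have h2 : ContDiff ℝ (⊤ : ℕ∞) (fun t => (Real.exp 1 + L t)⁻¹) :=
    (contDiff_const.add contDiff_L).inv (fun t => (eL_pos t).ne')
  exact h1.mul h2

lemma contDiff_gauss : ContDiff ℝ (⊤ : ℕ∞) gauss := by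
  have h : ContDiff ℝ (⊤ : ℕ∞) (fun t : ℝ => -t^2) := (contDiff_id.pow 2).neg
  exact h.exp

lemma continuous_w : Continuous w := contDiff_w.continuous
lemma continuous_L : Continuous L := contDiff_L.continuous
lemma continuous_phi : Continuous phi :=
  (continuous_const.mul continuous_L).mul (continuous_w.pow 2)
lemma continuous_dL : Continuous dL :=
  (continuous_const.mul continuous_id).div
    (continuous_const.add (continuous_pow 2)) (fun t => (one_add_sq_pos t).ne')
lemma measurable_w' : Measurable w' := by
  have h : w' = deriv w := funext fun t => ((hasDerivAt_w t).deriv).symm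
  rw [h]; exact measurable_deriv w
lemma measurable_gauss' : Measurable gauss' := by
  have h : gauss' = deriv gauss := funext fun t => ((hasDerivAt_gauss t).deriv).symm
  rw [h]; exact measurable_deriv gauss

lemma dL_sq_le (t : ℝ) : dL t ^ 2 ≤ 4 * (1 + t^2)⁻¹ := by
  have h := one_add_sq_pos t
  rw [dL, div_pow, div_le_iff₀ (by positivity)]
  have h2 : 4 * (1 + t^2)⁻¹ * (1+t^2)^2 = 4 * ((1+t^2)^2/(1+t^2)) := by ring
  have h3 : (1+t^2)^2/(1+t^2) = 1+t^2 := by field_simp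
  rw [h2, h3]
  nlinarith [sq_nonneg t, sq_nonneg (t^2)]

lemma two_le_eL (t : ℝ) : 2 ≤ Real.exp 1 + L t := by
  have h1 := Real.add_one_le_exp 1
  have := L_nonneg t
  linarith

lemma abs_w'_le (t : ℝ) : |w' t| ≤ |dL t| := by
  have hE := eL_pos t
  have hE2 := two_le_eL t
  set a := Real.exp (-(L t)/4) with ha
  set b := |dL t| with hb
  set c := (Real.exp 1 + L t)⁻¹ with hc
  have hapos : 0 < a := Real.exp_pos _
  have ha1 : a ≤ 1 := by
    rw [ha, Real.exp_le_one_iff]; have := L_nonneg t; linarith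
  have hb0 : 0 ≤ b := abs_nonneg _
  have hcpos : 0 < c := inv_pos.2 hE
  have hchalf : c ≤ 1/2 := by
    rw [hc]; rw [inv_le_comm₀ hE (by norm_num)]; norm_num; linarith
  have hsplit : |w' t| ≤ |a * (-(dL t)/4) * c| + |a * (-(dL t) / (Real.exp 1 + L t)^2)| :=
    abs_add_le _ _
  have e1 : |a * (-(dL t)/4) * c| = a * (b/4) * c := by
    rw [abs_mul, abs_mul, abs_of_pos hapos, abs_of_pos hcpos, abs_div, abs_neg, hb]
    norm_num
  have e2 : |a * (-(dL t) / (Real.exp 1 + L t)^2)| = a * (b * c^2) := by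
    rw [abs_mul, abs_of_pos hapos, abs_div, abs_neg, abs_of_pos (by positivity : (0:ℝ) < (Real.exp 1 + L t)^2), hb, hc, inv_pow]
    rw [div_eq_mul_inv]
  rw [e1, e2] at hsplit
  have k1 : a * (b/4) * c ≤ 1 * (b/4) * (1/2) := by
    have hb4 : (0:ℝ) ≤ b/4 := by linarith
    exact mul_le_mul (mul_le_mul ha1 le_rfl hb4 zero_le_one) hchalf hcpos.le (by linarith)
  have k2 : a * (b * c^2) ≤ 1 * (b * (1/2)^2) := by
    have hcc : c^2 ≤ (1/2)^2 := pow_le_pow_left₀ hcpos.le hchalf 2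
    have : b * c^2 ≤ b * (1/2)^2 := mul_le_mul_of_nonneg_left hcc hb0
    have hnn : 0 ≤ b * c^2 := by positivity
    nlinarith
  have hfin : 1 * (b/4) * (1/2) + 1 * (b * (1/2)^2) ≤ b := by nlinarith
  linarith

lemma w'_sq_le (t : ℝ) : w' t ^ 2 ≤ 4 * (1 + t^2)⁻¹ := by
  have h1 : w' t ^ 2 ≤ dL t ^2 := by
    have h := abs_w'_le t
    calc w' t ^2 = |w' t|^2 := (sq_abs _).symm
      _ ≤ |dL t|^2 := pow_le_pow_left₀ (abs_nonneg _) h 2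
      _ = dL t ^2 := sq_abs _
  exact h1.trans (dL_sq_le t)

lemma integrable_w'_sq : Integrable (fun t => w' t ^ 2) := by
  refine Integrable.mono' (g := fun t => 4 * (1 + t^2)⁻¹)
    (integrable_inv_one_add_sq.const_mul 4)
    ((measurable_w'.pow_const 2).aestronglyMeasurable) ?_
  refine Filter.Eventually.of_forall (fun t => ?_)
  rw [Real.norm_eq_abs, abs_of_nonneg (sq_nonneg _)]
  exact w'_sq_le t

lemma integrable_gauss : Integrable gauss := by
  have := integrable_exp_neg_mul_sq (b := 1) one_pos
  show Integrable (fun t : ℝ => Real.exp (-t^2)); simpa using this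

lemma integrable_gauss_sq : Integrable (fun t => gauss t ^ 2) := by
  have h : (fun t : ℝ => gauss t ^ 2) = fun t => Real.exp (-(2 * t^2)) := by
    funext t
    rw [gauss, ← Real.exp_nat_mul]; ring_nf
  rw [h]
  have := integrable_exp_neg_mul_sq (b := 2) two_pos
  simpa [neg_mul] using this

lemma integrable_gauss'_sq : Integrable (fun t => gauss' t ^ 2) := by
  refine Integrable.mono' (g := fun t => 4 * Real.exp (-t^2))
    (integrable_gauss.const_mul 4)
    ((measurable_gauss'.pow_const 2).aestronglyMeasurable) ?_
  refine Filter.Eventually.of_forall (fun t => ?_)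
  rw [Real.norm_eq_abs, abs_of_nonneg (sq_nonneg _)]
  have h1 : gauss' t ^2 = 4 * t^2 * Real.exp (-t^2) * Real.exp (-t^2) := by
    rw [gauss']; ring
  rw [h1]
  have h2 : t^2 * Real.exp (-t^2) ≤ 1 := by
    have h3 := Real.add_one_le_exp (t^2)
    have h4 : Real.exp (t^2) * Real.exp (-t^2) = 1 := by
      rw [← Real.exp_add]; simp
    nlinarith [Real.exp_pos (-t^2), Real.exp_pos (t^2)]
  show 4 * t^2 * Real.exp (-t^2) * Real.exp (-t^2) ≤ 4 * Real.exp (-t^2)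
  nlinarith [mul_le_mul_of_nonneg_right h2 (Real.exp_pos (-t^2)).le,
    Real.exp_pos (-t^2)]


def sigd (t : ℝ) : ℝ := dL t / (Real.exp 1 + L t)^2

lemma hasDerivAt_sig (t : ℝ) : HasDerivAt (fun t => -(Real.exp 1 + L t)⁻¹) (sigd t) t := by
  have h : HasDerivAt (fun t => Real.exp 1 + L t) (dL t) t := (hasDerivAt_L t).const_add _
  have h2 := (h.inv (eL_pos t).ne').neg
  have : sigd t = -(-dL t / (Real.exp 1 + L t)^2) := by rw [sigd]; ring
  rw [this]; exact h2

lemma tendsto_L : Filter.Tendsto L Filter.atTop Filter.atTop := by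
  apply Real.tendsto_log_atTop.comp
  apply Filter.tendsto_atTop_add_const_left
  exact Filter.tendsto_pow_atTop two_ne_zero

lemma L_even (t : ℝ) : L (-t) = L t := by simp [L]

lemma exp_negL_half (t : ℝ) : Real.exp (-(L t)/2) = (Real.exp (L t / 2))⁻¹ := by
  rw [← Real.exp_neg]; ring_nf

lemma integrableOn_sigd : IntegrableOn sigd (Ioi (1:ℝ)) := by
  apply integrableOn_Ioi_deriv_of_nonneg' (fun x _ => hasDerivAt_sig x)
  · intro x hx
    have hx0 : (0:ℝ) < x := lt_trans one_pos hx
    have : 0 ≤ dL x := by rw [dL]; positivity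
    exact div_nonneg this (by positivity)
  · have h1 : Filter.Tendsto (fun t => Real.exp 1 + L t) Filter.atTop Filter.atTop :=
      Filter.tendsto_atTop_add_const_left _ _ tendsto_L
    have h2 := h1.inv_tendsto_atTop
    have h3 := h2.neg
    simpa using h3

lemma w_sq_le_sigd {t : ℝ} (ht : 1 ≤ t) : w t ^ 2 ≤ sigd t := by
  have ht0 : 0 < t := lt_of_lt_of_le one_pos ht
  set X := Real.exp (L t / 2) with hX
  have hXpos : 0 < X := Real.exp_pos _
  have hX2 : X^2 = 1 + t^2 := exp_half_sq t
  have hEpos := eL_pos t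
  have hX2t : X ≤ 2*t := by nlinarith
  rw [w_sq, sigd, exp_negL_half, ← hX, dL, ← hX2, div_eq_mul_inv (2*t)]
  have hXinv : X⁻¹ ≤ 2*t*(X^2)⁻¹ := by
    rw [show X⁻¹ = X * (X^2)⁻¹ by field_simp]
    exact mul_le_mul_of_nonneg_right hX2t (by positivity)
  calc X⁻¹ * ((Real.exp 1 + L t)^2)⁻¹ ≤ (2*t*(X^2)⁻¹) * ((Real.exp 1 + L t)^2)⁻¹ :=
        mul_le_mul_of_nonneg_right hXinv (by positivity)
    _ = 2*t*(X^2)⁻¹ * ((Real.exp 1 + L t)^2)⁻¹ := by ring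

lemma sigd_nonneg {t : ℝ} (ht : 1 ≤ t) : 0 ≤ sigd t := by
  have ht0 : 0 < t := lt_of_lt_of_le one_pos ht
  have : 0 ≤ dL t := by rw [dL]; positivity
  exact div_nonneg this (by positivity)

lemma integrable_w_sq : Integrable (fun t => w t ^ 2) := by
  apply LocallyIntegrable.integrable_of_isBigO_atTop_of_norm_isNegInvariant
    (g := sigd) ((continuous_w.pow 2).locallyIntegrable)
  · refine Filter.Eventually.of_forall (fun t => ?_)
    simp only [Function.comp_apply, Pi.pow_apply]
    rw [show w (-t) = w t by unfold w; rw [L_even]]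
  · rw [Asymptotics.isBigO_iff]
    refine ⟨1, Filter.eventually_atTop.2 ⟨1, fun t ht => ?_⟩⟩
    rw [Real.norm_eq_abs, Real.norm_eq_abs, abs_of_nonneg (sq_nonneg _),
      abs_of_nonneg (sigd_nonneg ht), one_mul]
    exact w_sq_le_sigd ht
  · exact ⟨Ioi 1, Filter.Ioi_mem_atTop 1, integrableOn_sigd⟩


lemma continuous_rho' : Continuous rho' :=
  continuous_const.mul (continuous_dL.div (continuous_const.add continuous_L)
    (fun t => (eL_pos t).ne'))

lemma hasDerivAt_rho (t : ℝ) : HasDerivAt rho (rho' t) t := by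
  have h : HasDerivAt (fun t => Real.exp 1 + L t) (dL t) t := (hasDerivAt_L t).const_add _
  have h2 := (h.log (eL_pos t).ne').const_mul (1/16 : ℝ)
  have : rho' t = 1/16 * (dL t / (Real.exp 1 + L t)) := rfl
  rw [this]; exact h2

lemma tendsto_rho : Filter.Tendsto rho Filter.atTop Filter.atTop := by
  apply Filter.Tendsto.const_mul_atTop (by norm_num : (0:ℝ) < 1/16)
  exact Real.tendsto_log_atTop.comp (Filter.tendsto_atTop_add_const_left _ _ tendsto_L)

lemma phi_nonneg (t : ℝ) : 0 ≤ phi t := by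
  have h1 := L_nonneg t
  have h2 := sq_nonneg (w t)
  rw [phi]; positivity

lemma three_le_L {t : ℝ} (ht : 16 ≤ t) : 3 ≤ L t := by
  have h256 : (256:ℝ) ≤ t^2 := by nlinarith
  have h1 : Real.exp 3 ≤ 1 + t^2 := by
    have he : Real.exp 1 < 2.7182818286 := Real.exp_one_lt_d9
    have h3 : Real.exp 3 = Real.exp 1 ^ 3 := by
      rw [← Real.exp_nat_mul]; norm_num
    have hc : (2.7182818286:ℝ)^3 ≤ 21 := by norm_num
    have he2 : Real.exp 1 ^ 3 < 2.7182818286^3 :=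
      pow_lt_pow_left₀ he (Real.exp_pos 1).le (by norm_num)
    nlinarith
  rw [L, Real.le_log_iff_exp_le (one_add_sq_pos t)]
  exact h1

lemma e_le_three : Real.exp 1 ≤ 3 := by
  have := Real.exp_one_lt_d9; linarith

lemma rho'_le_phi {t : ℝ} (ht : 16 ≤ t) : rho' t ≤ phi t := by
  have ht0 : (0:ℝ) < t := by linarith
  set X := Real.exp (L t / 2) with hX
  have hXpos : 0 < X := Real.exp_pos _
  have hX2 : X^2 = 1 + t^2 := exp_half_sq t
  have hEpos := eL_pos t
  have hL3 := three_le_L ht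
  have hE2L : Real.exp 1 + L t ≤ 2 * L t := by
    have := e_le_three; linarith
  have htX : t ≤ X := by nlinarith
  rw [rho', phi, w_sq, exp_negL_half, ← hX, dL, ← hX2]
  set E := Real.exp 1 + L t with hE
  have key : t * E ≤ 2 * L t * X := by
    calc t * E ≤ X * (2 * L t) := by
          apply mul_le_mul htX hE2L hEpos.le hXpos.le
      _ = 2 * L t * X := by ring
  rw [show (1:ℝ)/16 * (2*t/X^2/E) = t/(8*(X^2*E)) by field_simp; try ring,
    show (1:ℝ)/2 * L t * (X⁻¹ * (E^2)⁻¹) = L t/(2*(X*E^2)) by field_simp; try ring]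
  rw [div_le_div_iff₀ (by positivity) (by positivity)]
  have hLpos : (0:ℝ) < L t := by linarith
  have h := mul_le_mul_of_nonneg_right key (by positivity : (0:ℝ) ≤ X*E)
  nlinarith [h, mul_pos (mul_pos hLpos (mul_pos hXpos hXpos)) hEpos]

lemma key_lower {M : ℝ} (hM : 16 ≤ M) : rho M - rho 16 ≤ ∫ t in Ioc (16:ℝ) M, phi t := by
  have h1 : ∫ t in (16:ℝ)..M, rho' t = rho M - rho 16 :=
    intervalIntegral.integral_eq_sub_of_hasDerivAt (fun x _ => hasDerivAt_rho x)
      (continuous_rho'.intervalIntegrable _ _)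
  have h2 : ∫ t in (16:ℝ)..M, rho' t ≤ ∫ t in (16:ℝ)..M, phi t := by
    apply intervalIntegral.integral_mono_on hM (continuous_rho'.intervalIntegrable _ _)
      (continuous_phi.intervalIntegrable _ _)
    intro x hx
    exact rho'_le_phi hx.1
  rw [intervalIntegral.integral_of_le hM, intervalIntegral.integral_of_le hM] at h2
  rw [intervalIntegral.integral_of_le hM] at h1
  linarith


variable {N : ℕ}

def vv (i0 i : Fin N) : ℝ → ℝ := if i = i0 then w else gauss
def vv' (i0 i : Fin N) : ℝ → ℝ := if i = i0 then w' else gauss'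
def hh (i0 i : Fin N) : ℝ → ℝ := if i = i0 then phi else fun t => gauss t^2
def P (i0 : Fin N) (y : Fin N → ℝ) : ℝ := ∏ i, vv i0 i (y i)

lemma vv_pos (i0 i : Fin N) (t : ℝ) : 0 < vv i0 i t := by
  unfold vv; split_ifs; exacts [w_pos t, gauss_pos t]
lemma vv_le_one (i0 i : Fin N) (t : ℝ) : vv i0 i t ≤ 1 := by
  unfold vv; split_ifs; exacts [w_le_one t, gauss_le_one t]
lemma contDiff_vv (i0 i : Fin N) : ContDiff ℝ (⊤ : ℕ∞) (vv i0 i) := by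
  unfold vv; split_ifs; exacts [contDiff_w, contDiff_gauss]
lemma hasDerivAt_vv (i0 i : Fin N) (t : ℝ) : HasDerivAt (vv i0 i) (vv' i0 i t) t := by
  unfold vv vv'; split_ifs; exacts [hasDerivAt_w t, hasDerivAt_gauss t]
lemma integrable_vv_sq (i0 i : Fin N) : Integrable (fun t => vv i0 i t ^ 2) := by
  unfold vv; split_ifs; exacts [integrable_w_sq, integrable_gauss_sq]
lemma integrable_vv'_sq (i0 i : Fin N) : Integrable (fun t => vv' i0 i t ^ 2) := by
  unfold vv'; split_ifs; exacts [integrable_w'_sq, integrable_gauss'_sq]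
lemma continuous_vv (i0 i : Fin N) : Continuous (vv i0 i) := (contDiff_vv i0 i).continuous

lemma P_pos (i0 : Fin N) (y : Fin N → ℝ) : 0 < P i0 y :=
  Finset.prod_pos (fun i _ => vv_pos i0 i (y i))
lemma P_le_one (i0 : Fin N) (y : Fin N → ℝ) : P i0 y ≤ 1 :=
  Finset.prod_le_one (fun i _ => (vv_pos i0 i (y i)).le) (fun i _ => vv_le_one i0 i (y i))

lemma P_eq (i0 : Fin N) (y : Fin N → ℝ) :
    P i0 y = w (y i0) * ∏ j ∈ Finset.univ.erase i0, gauss (y j) := by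
  rw [P, ← Finset.mul_prod_erase Finset.univ _ (Finset.mem_univ i0)]
  congr 1
  · unfold vv; rw [if_pos rfl]
  · apply Finset.prod_congr rfl
    intro j hj
    unfold vv; rw [if_neg (Finset.ne_of_mem_erase hj)]

lemma P_le_w (i0 : Fin N) (y : Fin N → ℝ) : P i0 y ≤ w (y i0) := by
  rw [P_eq]
  have h1 : ∏ j ∈ Finset.univ.erase i0, gauss (y j) ≤ 1 :=
    Finset.prod_le_one (fun j _ => (gauss_pos (y j)).le) (fun j _ => gauss_le_one (y j))
  calc w (y i0) * ∏ j ∈ Finset.univ.erase i0, gauss (y j) ≤ w (y i0) * 1 :=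
        mul_le_mul_of_nonneg_left h1 (w_pos (y i0)).le
    _ = w (y i0) := mul_one _

lemma log_w_le (t : ℝ) : Real.log (w t) ≤ -(L t)/4 := by
  rw [w, Real.log_mul (Real.exp_pos _).ne' (inv_pos.2 (eL_pos t)).ne', Real.log_exp,
    Real.log_inv]
  have : 0 ≤ Real.log (Real.exp 1 + L t) := by
    apply Real.log_nonneg
    have := Real.add_one_le_exp 1
    have := L_nonneg t
    linarith
  linarith

lemma neg_log_P_sq (i0 : Fin N) (y : Fin N → ℝ) :
    L (y i0) / 2 ≤ -Real.log ((P i0 y)^2) := by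
  have h1 : Real.log ((P i0 y)^2) = 2 * Real.log (P i0 y) := by
    rw [Real.log_pow]; norm_num
  have h2 : Real.log (P i0 y) ≤ Real.log (w (y i0)) :=
    Real.log_le_log (P_pos i0 y) (P_le_w i0 y)
  have h3 := log_w_le (y i0)
  rw [h1]
  linarith

lemma key_pointwise (i0 : Fin N) (y : Fin N → ℝ) :
    ∏ i, hh i0 i (y i) ≤ -((P i0 y)^2 * Real.log ((P i0 y)^2)) := by
  have hP := P_pos i0 y
  have hT2 : ∏ j ∈ Finset.univ.erase i0, gauss (y j)^2
      = (∏ j ∈ Finset.univ.erase i0, gauss (y j))^2 := by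
    rw [← Finset.prod_pow]
  have hprod : ∏ i, hh i0 i (y i)
      = phi (y i0) * ∏ j ∈ Finset.univ.erase i0, gauss (y j)^2 := by
    rw [← Finset.mul_prod_erase Finset.univ _ (Finset.mem_univ i0)]
    congr 1
    · unfold hh; rw [if_pos rfl]
    · apply Finset.prod_congr rfl
      intro j hj
      unfold hh; rw [if_neg (Finset.ne_of_mem_erase hj)]
  have hPsq : (P i0 y)^2 = w (y i0)^2 * ∏ j ∈ Finset.univ.erase i0, gauss (y j)^2 := by
    rw [P_eq, mul_pow, hT2]
  have hlog := neg_log_P_sq i0 y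
  have hL := L_nonneg (y i0)
  calc ∏ i, hh i0 i (y i) = (1/2 * L (y i0)) * (P i0 y)^2 := by
        rw [hprod, hPsq, phi]; ring
    _ ≤ (-Real.log ((P i0 y)^2)) * (P i0 y)^2 := by
        apply mul_le_mul_of_nonneg_right _ (sq_nonneg _)
        linarith
    _ = -((P i0 y)^2 * Real.log ((P i0 y)^2)) := by ring


def hhM (i0 : Fin N) (M : ℝ) (i : Fin N) : ℝ → ℝ :=
  if i = i0 then (Set.Ioc (16:ℝ) M).indicator phi else fun t => gauss t^2

lemma hhM_nonneg (i0 : Fin N) (M : ℝ) (i : Fin N) (t : ℝ) : 0 ≤ hhM i0 M i t := by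
  unfold hhM; split_ifs
  · exact Set.indicator_nonneg (fun s _ => phi_nonneg s) t
  · positivity

lemma hhM_le_hh (i0 : Fin N) (M : ℝ) (i : Fin N) (t : ℝ) : hhM i0 M i t ≤ hh i0 i t := by
  unfold hhM hh; split_ifs
  · exact Set.indicator_le_self' (fun s _ => phi_nonneg s) t
  · exact le_refl _

lemma integrable_hhM (i0 : Fin N) (M : ℝ) (i : Fin N) : Integrable (hhM i0 M i) := by
  unfold hhM; split_ifs
  · refine IntegrableOn.integrable_indicator ?_ measurableSet_Ioc
    exact (continuous_phi.continuousOn.integrableOn_compact isCompact_Icc).mono_set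
      Set.Ioc_subset_Icc_self
  · exact integrable_gauss_sq

lemma c_pos : 0 < ∫ t : ℝ, gauss t ^2 := by
  rw [integral_pos_iff_support_of_nonneg (fun t => sq_nonneg _) integrable_gauss_sq]
  have : (Function.support fun t : ℝ => gauss t ^2) = Set.univ := by
    ext t; simp [Function.support, (gauss_pos t).ne']
  rw [this]
  simp [Real.volume_univ]

lemma prod_integral_hhM (i0 : Fin N) (M : ℝ) :
    ∫ y : Fin N → ℝ, ∏ i, hhM i0 M i (y i)
      = (∫ t in Set.Ioc (16:ℝ) M, phi t) * (∫ t : ℝ, gauss t ^2) ^ (Finset.univ.erase i0).card := by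
  rw [integral_fintype_prod_volume_eq_prod (𝕜 := ℝ) (f := hhM i0 M)]
  rw [← Finset.mul_prod_erase Finset.univ _ (Finset.mem_univ i0)]
  congr 1
  · rw [hhM, if_pos rfl, integral_indicator measurableSet_Ioc]
  · rw [← Finset.prod_const]
    apply Finset.prod_congr rfl
    intro j hj
    rw [hhM, if_neg (Finset.ne_of_mem_erase hj)]

lemma lintegral_pi_top (i0 : Fin N) :
    ∫⁻ y : Fin N → ℝ, ENNReal.ofReal (-((P i0 y)^2 * Real.log ((P i0 y)^2))) = ⊤ := by
  by_contra hne
  set I := ∫⁻ y : Fin N → ℝ, ENNReal.ofReal (-((P i0 y)^2 * Real.log ((P i0 y)^2))) with hI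
  set c := ∫ t : ℝ, gauss t ^2 with hc
  set k := (Finset.univ.erase i0).card with hk
  have hck : 0 < c ^ k := pow_pos c_pos k
  -- for every M, lower bound
  have hlow : ∀ M : ℝ, 16 ≤ M → ENNReal.ofReal ((rho M - rho 16) * c^k) ≤ I := by
    intro M hM
    have hint : Integrable (fun y : Fin N → ℝ => ∏ i, hhM i0 M i (y i)) :=
      Integrable.fintype_prod (f := hhM i0 M) (fun i => integrable_hhM i0 M i)
    have h1 : ∫⁻ y : Fin N → ℝ, ENNReal.ofReal (∏ i, hhM i0 M i (y i)) ≤ I := by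
      apply lintegral_mono
      intro y
      apply ENNReal.ofReal_le_ofReal
      refine le_trans ?_ (key_pointwise i0 y)
      exact Finset.prod_le_prod (fun i _ => hhM_nonneg i0 M i (y i))
        (fun i _ => hhM_le_hh i0 M i (y i))
    have h2 : ∫⁻ y : Fin N → ℝ, ENNReal.ofReal (∏ i, hhM i0 M i (y i))
        = ENNReal.ofReal (∫ y : Fin N → ℝ, ∏ i, hhM i0 M i (y i)) :=
      (ofReal_integral_eq_lintegral_ofReal hint
        (Filter.Eventually.of_forall (fun y =>
          Finset.prod_nonneg (fun i _ => hhM_nonneg i0 M i (y i))))).symm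
    rw [h2, prod_integral_hhM] at h1
    refine le_trans ?_ h1
    apply ENNReal.ofReal_le_ofReal
    exact mul_le_mul_of_nonneg_right (key_lower hM) hck.le
  -- choose M large
  have hev : ∀ᶠ M in Filter.atTop, rho 16 + (I.toReal + 1)/c^k ≤ rho M :=
    tendsto_rho.eventually_ge_atTop _
  obtain ⟨M, hM1, hM2⟩ := (hev.and (Filter.eventually_ge_atTop (16:ℝ))).exists
  have hge : I.toReal + 1 ≤ (rho M - rho 16) * c^k := by
    rw [← div_le_iff₀ hck]
    linarith
  have h3 : ENNReal.ofReal (I.toReal + 1) ≤ I :=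
    le_trans (ENNReal.ofReal_le_ofReal hge) (hlow M hM2)
  have h4 : I < ENNReal.ofReal (I.toReal + 1) := by
    conv_lhs => rw [← ENNReal.ofReal_toReal hne]
    rw [ENNReal.ofReal_lt_ofReal_iff (by positivity)]
    linarith [ENNReal.toReal_nonneg (a := I)]
  exact absurd (lt_of_lt_of_le h4 h3) (lt_irrefl I)


-- coordinate projection norm
lemma norm_proj_le (i : Fin N) :
    ‖(EuclideanSpace.proj i : EuclideanSpace ℝ (Fin N) →L[ℝ] ℝ)‖ ≤ 1 := by
  apply ContinuousLinearMap.opNorm_le_bound _ zero_le_one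
  intro x
  rw [one_mul]
  have h1 : ‖(EuclideanSpace.proj i : EuclideanSpace ℝ (Fin N) →L[ℝ] ℝ) x‖ = |x i| := by
    simp [Real.norm_eq_abs]
  rw [h1, EuclideanSpace.norm_eq, ← Real.sqrt_sq_eq_abs]
  apply Real.sqrt_le_sqrt
  have := Finset.single_le_sum (f := fun j => ‖x j‖^2)
    (fun j _ => sq_nonneg _) (Finset.mem_univ i)
  simpa [Real.norm_eq_abs, sq_abs] using this

def qq (i0 i j : Fin N) : ℝ → ℝ :=
  if j = i then fun t => vv' i0 i t^2 else fun t => vv i0 j t^2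

lemma integrable_qq (i0 i j : Fin N) : Integrable (qq i0 i j) := by
  unfold qq; split_ifs
  · exact integrable_vv'_sq i0 i
  · exact integrable_vv_sq i0 j

lemma prod_qq_eq (i0 i : Fin N) (y : Fin N → ℝ) :
    ∏ j, qq i0 i j (y j) = vv' i0 i (y i)^2 * ∏ j ∈ Finset.univ.erase i, vv i0 j (y j)^2 := by
  rw [← Finset.mul_prod_erase Finset.univ _ (Finset.mem_univ i)]
  congr 1
  · rw [qq, if_pos rfl]
  · apply Finset.prod_congr rfl
    intro j hj
    rw [qq, if_neg (Finset.ne_of_mem_erase hj)]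


end LogSchrAux

open LogSchrAux

/-- For every `N ≥ 1` there exists a smooth `u : ℝ^N → ℝ` with
`u ∈ L²(ℝ^N)` and `|∇u| ∈ L²(ℝ^N)`, but such that `x ↦ u(x)²·log(u(x)²)` is NOT
Lebesgue integrable on `ℝ^N`; in fact the integral of its negative part is `+∞`.
Hence the formal energy functional of the logarithmic Schrödinger equation is not well
defined on `H¹(ℝ^N)`. -/
theorem exists_H1_function_with_nonintegrable_log_term (N : ℕ) (hN : 1 ≤ N) :
    ∃ u : EuclideanSpace ℝ (Fin N) → ℝ, ContDiff ℝ (⊤ : ℕ∞) u ∧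
      Integrable (fun x => (u x) ^ 2) ∧
      Integrable (fun x => ‖fderiv ℝ u x‖ ^ 2) ∧
      ¬ Integrable (fun x => (u x) ^ 2 * Real.log ((u x) ^ 2)) ∧
      ∫⁻ x, ENNReal.ofReal (-((u x) ^ 2 * Real.log ((u x) ^ 2))) = ⊤ := by
  classical
  set i0 : Fin N := ⟨0, hN⟩
  set e := (MeasurableEquiv.toLp 2 (Fin N → ℝ)).symm with he
  have vp := EuclideanSpace.volume_preserving_symm_measurableEquiv_toLp (Fin N)
  set u : EuclideanSpace ℝ (Fin N) → ℝ := fun x => ∏ i, vv i0 i (x i) with hu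
  -- smoothness
  have hsmooth : ContDiff ℝ (⊤ : ℕ∞) u := by
    apply contDiff_prod (t := Finset.univ) (f := fun i (x : EuclideanSpace ℝ (Fin N)) => vv i0 i (x i))
    intro i _
    exact (contDiff_vv i0 i).comp (EuclideanSpace.proj i : EuclideanSpace ℝ (Fin N) →L[ℝ] ℝ).contDiff
  -- L² integrability
  have hL2 : Integrable (fun x : EuclideanSpace ℝ (Fin N) => (u x)^2) := by
    have heq : (fun x : EuclideanSpace ℝ (Fin N) => (u x)^2)
        = (fun y : Fin N → ℝ => ∏ i, vv i0 i (y i)^2) ∘ e := by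
      funext x
      show (∏ i, vv i0 i (x i))^2 = ∏ i, vv i0 i (x i)^2
      rw [Finset.prod_pow]
    rw [heq]
    exact (vp.integrable_comp_emb e.measurableEmbedding).2
      (Integrable.fintype_prod (f := fun i t => vv i0 i t^2) (fun i => integrable_vv_sq i0 i))
  -- gradient
  have hFD : ∀ x : EuclideanSpace ℝ (Fin N), HasFDerivAt u
      (∑ i, (∏ j ∈ Finset.univ.erase i, vv i0 j (x j)) •
        ((vv' i0 i (x i)) • (EuclideanSpace.proj i : EuclideanSpace ℝ (Fin N) →L[ℝ] ℝ))) x := by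
    intro x
    have hp : ∀ i : Fin N, HasFDerivAt (fun x : EuclideanSpace ℝ (Fin N) => x i)
        (EuclideanSpace.proj i : EuclideanSpace ℝ (Fin N) →L[ℝ] ℝ) x :=
      fun i => (EuclideanSpace.proj i : EuclideanSpace ℝ (Fin N) →L[ℝ] ℝ).hasFDerivAt
    exact HasFDerivAt.finset_prod (fun i _ =>
      (hasDerivAt_vv i0 i (x i)).comp_hasFDerivAt x (hp i))
  have hgrad : Integrable (fun x : EuclideanSpace ℝ (Fin N) => ‖fderiv ℝ u x‖^2) := by
    have hmeas : AEStronglyMeasurable (fun x : EuclideanSpace ℝ (Fin N) => ‖fderiv ℝ u x‖^2) volume :=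
      (((hsmooth.continuous_fderiv (by simp)).norm).pow 2).aestronglyMeasurable
    have hBint : Integrable (fun x : EuclideanSpace ℝ (Fin N) =>
        (N:ℝ) * ∑ i, ∏ j, qq i0 i j (x j)) := by
      apply Integrable.const_mul
      apply integrable_finset_sum
      intro i _
      have heq : (fun x : EuclideanSpace ℝ (Fin N) => ∏ j, qq i0 i j (x j))
          = (fun y : Fin N → ℝ => ∏ j, qq i0 i j (y j)) ∘ e := rfl
      rw [heq]
      exact (vp.integrable_comp_emb e.measurableEmbedding).2
        (Integrable.fintype_prod (f := qq i0 i) (fun j => integrable_qq i0 i j))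
    apply Integrable.mono' hBint hmeas
    refine Filter.Eventually.of_forall (fun x => ?_)
    rw [Real.norm_eq_abs, abs_of_nonneg (sq_nonneg _)]
    have hnorm : ‖fderiv ℝ u x‖ ≤ ∑ i, |∏ j ∈ Finset.univ.erase i, vv i0 j (x j)| * |vv' i0 i (x i)| := by
      rw [(hFD x).fderiv]
      refine le_trans (norm_sum_le _ _) (Finset.sum_le_sum (fun i _ => ?_))
      rw [norm_smul, norm_smul, Real.norm_eq_abs, Real.norm_eq_abs]
      calc |∏ j ∈ Finset.univ.erase i, vv i0 j (x j)| * (|vv' i0 i (x i)| * ‖(EuclideanSpace.proj i : EuclideanSpace ℝ (Fin N) →L[ℝ] ℝ)‖)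
          ≤ |∏ j ∈ Finset.univ.erase i, vv i0 j (x j)| * (|vv' i0 i (x i)| * 1) := by
            gcongr
            exact norm_proj_le i
        _ = |∏ j ∈ Finset.univ.erase i, vv i0 j (x j)| * |vv' i0 i (x i)| := by ring
    have h1 : ‖fderiv ℝ u x‖^2 ≤ (∑ i, |∏ j ∈ Finset.univ.erase i, vv i0 j (x j)| * |vv' i0 i (x i)|)^2 :=
      pow_le_pow_left₀ (norm_nonneg _) hnorm 2
    have h2 : (∑ i, |∏ j ∈ Finset.univ.erase i, vv i0 j (x j)| * |vv' i0 i (x i)|)^2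
        ≤ (N:ℝ) * ∑ i, (|∏ j ∈ Finset.univ.erase i, vv i0 j (x j)| * |vv' i0 i (x i)|)^2 := by
      have := sq_sum_le_card_mul_sum_sq
        (s := Finset.univ) (f := fun i => |∏ j ∈ Finset.univ.erase i, vv i0 j (x j)| * |vv' i0 i (x i)|)
      simpa [Finset.card_univ] using this
    refine (h1.trans h2).trans ?_
    apply mul_le_mul_of_nonneg_left _ (Nat.cast_nonneg N)
    apply Finset.sum_le_sum
    intro i _
    rw [prod_qq_eq, mul_pow, sq_abs, sq_abs, ← Finset.prod_pow]
    exact le_of_eq (mul_comm _ _)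
  -- lintegral top
  have htop : ∫⁻ x : EuclideanSpace ℝ (Fin N),
      ENNReal.ofReal (-((u x)^2 * Real.log ((u x)^2))) = ⊤ := by
    have heq : (fun x : EuclideanSpace ℝ (Fin N) =>
        ENNReal.ofReal (-((u x)^2 * Real.log ((u x)^2))))
        = fun x => (fun y : Fin N → ℝ =>
            ENNReal.ofReal (-((P i0 y)^2 * Real.log ((P i0 y)^2)))) (e x) := rfl
    have hmeasP : Measurable (fun y : Fin N → ℝ =>
        ENNReal.ofReal (-((P i0 y)^2 * Real.log ((P i0 y)^2)))) := by
      have hP : Continuous (P i0) := by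
        apply continuous_finset_prod
        intro i _
        exact (continuous_vv i0 i).comp (continuous_apply i)
      exact ENNReal.measurable_ofReal.comp
        (((hP.measurable.pow_const 2).mul
          (Real.measurable_log.comp (hP.measurable.pow_const 2))).neg)
    rw [heq, vp.lintegral_comp hmeasP]
    exact lintegral_pi_top i0
  -- non-integrability
  have hnonint : ¬ Integrable (fun x : EuclideanSpace ℝ (Fin N) =>
      (u x)^2 * Real.log ((u x)^2)) := by
    intro hint
    have hfin := hint.hasFiniteIntegral
    rw [HasFiniteIntegral] at hfin
    have hle : ∫⁻ x : EuclideanSpace ℝ (Fin N),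
        ENNReal.ofReal (-((u x)^2 * Real.log ((u x)^2))) ≤
        ∫⁻ x : EuclideanSpace ℝ (Fin N), (‖(u x)^2 * Real.log ((u x)^2)‖₊ : ENNReal) := by
      apply lintegral_mono
      intro x
      calc ENNReal.ofReal (-((u x)^2 * Real.log ((u x)^2)))
          ≤ ENNReal.ofReal ‖(u x)^2 * Real.log ((u x)^2)‖ := by
            apply ENNReal.ofReal_le_ofReal
            rw [Real.norm_eq_abs]
            exact neg_le_abs _
        _ = (‖(u x)^2 * Real.log ((u x)^2)‖₊ : ENNReal) := ofReal_norm_eq_enorm _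
    rw [htop] at hle
    exact absurd (lt_of_le_of_lt (top_le_iff.1 hle ▸ le_refl _) hfin) (lt_irrefl _)
  exact ⟨u, hsmooth, hL2, hgrad, hnonint, htop⟩
end LogSchrAux
end
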